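/- Let r, t be nonzero real numbers and set s = −r, u = −t. Then [C_{f0}] ⊆ B[C_{f0}]: if a double sequence x is strongly almost null, then B(r,−r,t,−t)x is strongly almost null. -/

import Mathlib

open Finset

noncomputable section

/-- The four-dimensional generalized difference matrix `B(r,s,t,u)` acting on a
double sequence `x : ℕ × ℕ → ℂ`; terms with a negative index are taken to be `0`. -/
def Btrans (r s t u : ℝ) (x : ℕ × ℕ → ℂ) : ℕ × ℕ → ℂ := fun p =>
  (s * u : ℂ) * (if p.1 = 0 ∨ p.2 = 0 then 0 else x (p.1 - 1, p.2 - 1)) +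
  (s * t : ℂ) * (if p.1 = 0 then 0 else x (p.1 - 1, p.2)) +
  (r * u : ℂ) * (if p.2 = 0 then 0 else x (p.1, p.2 - 1)) +
  (r * t : ℂ) * x p

/-- `x` is strongly almost convergent to `L` ("[f2]-lim x = L"). -/
def StronglyAlmostConvTo (x : ℕ × ℕ → ℂ) (L : ℂ) : Prop :=
  ∀ ε > (0 : ℝ), ∃ Q : ℕ, ∀ q q' : ℕ, Q ≤ q → Q ≤ q' → ∀ m n : ℕ,
    (1 / (((q : ℝ) + 1) * ((q' : ℝ) + 1))) *
      ∑ k ∈ Finset.range (q + 1), ∑ l ∈ Finset.range (q' + 1),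
        ‖x (m + k, n + l) - L‖ < ε
/-- `x` is almost convergent to `L` ("f2-lim x = L"). -/
def AlmostConvTo (x : ℕ × ℕ → ℂ) (L : ℂ) : Prop :=
  ∀ ε > (0 : ℝ), ∃ Q : ℕ, ∀ q q' : ℕ, Q ≤ q → Q ≤ q' → ∀ m n : ℕ,
    ‖(1 / (((q : ℂ) + 1) * ((q' : ℂ) + 1))) *
      (∑ k ∈ Finset.range (q + 1), ∑ l ∈ Finset.range (q' + 1), x (m + k, n + l)) - L‖ < ε

/-- The set of values whose supremum is the `[C_f]`-norm of `y`. -/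
def CfNormSet (y : ℕ × ℕ → ℂ) : Set ℝ :=
  {v | ∃ q q' m n : ℕ, v = (1 / (((q : ℝ) + 1) * ((q' : ℝ) + 1))) *
    ∑ k ∈ Finset.range (q + 1), ∑ l ∈ Finset.range (q' + 1), ‖y (m + k, n + l)‖}

/-- The `[C_f]`-norm. -/
def CfNorm (y : ℕ × ℕ → ℂ) : ℝ := sSup (CfNormSet y)

/-- The formal inverse transform of `B(r,s,t,u)`. -/
def Binv (r s t u : ℝ) (y : ℕ × ℕ → ℂ) : ℕ × ℕ → ℂ := fun p =>
  (1 / (r * t : ℂ)) * ∑ k ∈ Finset.range (p.1 + 1), ∑ l ∈ Finset.range (p.2 + 1),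
    ((-s : ℂ) / r) ^ (p.1 - k) * ((-u : ℂ) / t) ^ (p.2 - l) * y (k, l)

/-- Pringsheim convergence of a double sequence. -/
def PConvTo (s : ℕ × ℕ → ℂ) (S : ℂ) : Prop :=
  ∀ ε > (0 : ℝ), ∃ N : ℕ, ∀ m n : ℕ, N ≤ m → N ≤ n → ‖s (m, n) - S‖ < ε

/-- Boundedness of a double sequence. -/
def Bdd2 (s : ℕ × ℕ → ℂ) : Prop := ∃ M : ℝ, ∀ m n : ℕ, ‖s (m, n)‖ ≤ M

/-- bp-convergence: bounded Pringsheim convergence. -/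
def BPConvTo (s : ℕ × ℕ → ℂ) (S : ℂ) : Prop := Bdd2 s ∧ PConvTo s S

/-- Rectangular partial sums of a double series. -/
def PartialSums (c : ℕ × ℕ → ℂ) : ℕ × ℕ → ℂ := fun p =>
  ∑ k ∈ Finset.range (p.1 + 1), ∑ l ∈ Finset.range (p.2 + 1), c (k, l)

/-- bp-convergence of the double series `Σ c_{kl}`. -/
def BPSeriesConv (c : ℕ × ℕ → ℂ) : Prop := ∃ S, BPConvTo (PartialSums c) S

/-- Pringsheim convergence of a real double sequence. -/
def PConvToR (s : ℕ × ℕ → ℝ) (S : ℝ) : Prop :=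
  ∀ ε > (0 : ℝ), ∃ N : ℕ, ∀ m n : ℕ, N ≤ m → N ≤ n → |s (m, n) - S| < ε

/-- bp-convergence of a real double sequence. -/
def BPConvToR (s : ℕ × ℕ → ℝ) (S : ℝ) : Prop :=
  (∃ M : ℝ, ∀ m n : ℕ, |s (m, n)| ≤ M) ∧ PConvToR s S

/-- The rectangle `{(j,k) : m ≤ j ≤ m+p-1, n ≤ k ≤ n+q-1}`. -/
def rectSet (m n p q : ℕ) : Set (ℕ × ℕ) :=
  {jk | m ≤ jk.1 ∧ jk.1 ≤ m + p - 1 ∧ n ≤ jk.2 ∧ jk.2 ≤ n + q - 1}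

/-- `E` is uniformly of zero density. -/
def UnifZeroDensity (E : Set (ℕ × ℕ)) : Prop :=
  ∀ ε > (0 : ℝ), ∃ P : ℕ, ∀ p q : ℕ, P ≤ p → P ≤ q → ∀ m n : ℕ,
    ((E ∩ rectSet m n p q).ncard : ℝ) ≤ ε * p * q

/-- The inner sums `Σ_{j=k}^{m} Σ_{i=l}^{n} (−s/r)^{j−k} (−u/t)^{i−l} a_{ji}`. -/
def innerS (r s t u : ℝ) (a : ℕ × ℕ → ℂ) (k l m n : ℕ) : ℂ :=
  ∑ j ∈ Finset.Icc k m, ∑ i ∈ Finset.Icc l n,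
    ((-s : ℂ) / r) ^ (j - k) * ((-u : ℂ) / t) ^ (i - l) * a (j, i)

/-- The matrix `d_{mnkl}(a)` (taken to be `0` when `k > m` or `l > n`). -/
def dmat (r s t u : ℝ) (a : ℕ × ℕ → ℂ) (m n k l : ℕ) : ℂ :=
  innerS r s t u a k l m n / (r * t : ℂ)

/-- The double difference `Δ₁₁ a_{mnkl}`. -/
def Delta11 (A : ℕ × ℕ → ℕ × ℕ → ℂ) (m n k l : ℕ) : ℂ :=
  A (m, n) (k, l) - A (m, n) (k + 1, l) - A (m, n) (k, l + 1) + A (m, n) (k + 1, l + 1)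

/-- The matrix `e_{mnkl}` associated with a four-dimensional matrix `A`
(taken to be `0` when `k > m` or `l > n`). -/
def emat (r s t u : ℝ) (A : ℕ × ℕ → ℕ × ℕ → ℂ) (m n k l : ℕ) : ℂ :=
  ∑ i ∈ Finset.Icc k m, ∑ j ∈ Finset.Icc l n,
    ((-s : ℂ) / r) ^ (i - k) * ((-u : ℂ) / t) ^ (j - l) * A (m, n) (i, j) / (r * t : ℂ)

/-- `Δ₁₁` applied to the `e`-matrix. -/
def Delta11e (r s t u : ℝ) (A : ℕ × ℕ → ℕ × ℕ → ℂ) (m n k l : ℕ) : ℂ :=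
  emat r s t u A m n k l - emat r s t u A m n (k + 1) l -
    emat r s t u A m n k (l + 1) + emat r s t u A m n (k + 1) (l + 1)

end

/-!
`B(r,s,t,u)` is a linear combination of the identity and the three unit shifts of a double
sequence. Strong almost convergence is preserved by sums and scalar multiples, and a unit shift
maps a window `[m, m+q] × [n, n+q']` onto the window one step lower (with a zero boundary row or
column when it would leave `ℕ × ℕ`), so it preserves strong almost nullity.
-/

noncomputable def windowSum (x : ℕ × ℕ → ℂ) (L : ℂ) (q q' m n : ℕ) : ℝ :=
  ∑ k ∈ range (q + 1), ∑ l ∈ range (q' + 1), ‖x (m + k, n + l) - L‖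

def shiftFst (x : ℕ × ℕ → ℂ) : ℕ × ℕ → ℂ := fun p =>
  if p.1 = 0 then 0 else x (p.1 - 1, p.2)

def shiftSnd (x : ℕ × ℕ → ℂ) : ℕ × ℕ → ℂ := fun p =>
  if p.2 = 0 then 0 else x (p.1, p.2 - 1)

lemma sum_range_shift_le {g : ℕ → ℝ} (hg : ∀ i, 0 ≤ g i) (m q : ℕ) :
    ∑ k ∈ range (q + 1), (if m + k = 0 then 0 else g (m + k - 1)) ≤
      ∑ k ∈ range (q + 1), g (m - 1 + k) := by
  cases m with
  | zero =>
    rw [sum_range_succ', sum_range_succ]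
    simpa using hg q
  | succ m =>
    refine le_of_eq (sum_congr rfl fun k _ => ?_)
    rw [if_neg (by omega)]
    congr 1
    omega

lemma windowSum_nonneg (x : ℕ × ℕ → ℂ) (L : ℂ) (q q' m n : ℕ) :
    0 ≤ windowSum x L q q' m n :=
  sum_nonneg fun _ _ => sum_nonneg fun _ _ => norm_nonneg _

lemma stronglyAlmostConvTo_iff_windowSum {x : ℕ × ℕ → ℂ} {L : ℂ} :
    StronglyAlmostConvTo x L ↔
      ∀ ε > (0 : ℝ), ∃ Q : ℕ, ∀ q q' : ℕ, Q ≤ q → Q ≤ q' → ∀ m n : ℕ,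
        windowSum x L q q' m n < ε * (((q : ℝ) + 1) * ((q' : ℝ) + 1)) := by
  refine forall₂_congr fun _ _ => exists_congr fun _ =>
    forall₄_congr fun q q' _ _ => forall₂_congr fun m n => ?_
  rw [one_div_mul_eq_div, div_lt_iff₀ (by positivity)]
  rfl

namespace StronglyAlmostConvTo

variable {x y : ℕ × ℕ → ℂ} {L M : ℂ}

lemma add (hx : StronglyAlmostConvTo x L) (hy : StronglyAlmostConvTo y M) :
    StronglyAlmostConvTo (x + y) (L + M) := by
  rw [stronglyAlmostConvTo_iff_windowSum] at hx hy ⊢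
  intro ε hε
  obtain ⟨Q₁, hQ₁⟩ := hx (ε / 2) (half_pos hε)
  obtain ⟨Q₂, hQ₂⟩ := hy (ε / 2) (half_pos hε)
  refine ⟨max Q₁ Q₂, fun q q' hq hq' m n => ?_⟩
  have hsum : windowSum (x + y) (L + M) q q' m n ≤
      windowSum x L q q' m n + windowSum y M q q' m n := by
    simp only [windowSum, ← sum_add_distrib]
    gcongr with k _ l _
    rw [Pi.add_apply, add_sub_add_comm]
    exact norm_add_le _ _
  linarith [hQ₁ q q' (le_of_max_le_left hq) (le_of_max_le_left hq') m n,
    hQ₂ q q' (le_of_max_le_right hq) (le_of_max_le_right hq') m n]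

lemma const_smul (hx : StronglyAlmostConvTo x L) (c : ℂ) :
    StronglyAlmostConvTo (c • x) (c • L) := by
  rw [stronglyAlmostConvTo_iff_windowSum] at hx ⊢
  intro ε hε
  obtain ⟨Q, hQ⟩ := hx (ε / (‖c‖ + 1)) (by positivity)
  refine ⟨Q, fun q q' hq hq' m n => ?_⟩
  have hsum : windowSum (c • x) (c • L) q q' m n = ‖c‖ * windowSum x L q q' m n := by
    simp only [windowSum, mul_sum, Pi.smul_apply, smul_eq_mul, ← mul_sub, norm_mul]
  calc windowSum (c • x) (c • L) q q' m n
      ≤ (‖c‖ + 1) * windowSum x L q q' m n := by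
        rw [hsum]; linarith [windowSum_nonneg x L q q' m n]
    _ < (‖c‖ + 1) * (ε / (‖c‖ + 1) * (((q : ℝ) + 1) * ((q' : ℝ) + 1))) := by
        gcongr; exact hQ q q' hq hq' m n
    _ = ε * (((q : ℝ) + 1) * ((q' : ℝ) + 1)) := by field_simp

lemma of_windowSum_le (hx : StronglyAlmostConvTo x L)
    (h : ∀ q q' m n, ∃ m' n', windowSum y M q q' m n ≤ windowSum x L q q' m' n') :
    StronglyAlmostConvTo y M := by
  rw [stronglyAlmostConvTo_iff_windowSum] at hx ⊢
  intro ε hε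
  obtain ⟨Q, hQ⟩ := hx ε hε
  refine ⟨Q, fun q q' hq hq' m n => ?_⟩
  obtain ⟨m', n', hle⟩ := h q q' m n
  exact hle.trans_lt (hQ q q' hq hq' m' n')

lemma shiftFst (hx : StronglyAlmostConvTo x 0) : StronglyAlmostConvTo (_root_.shiftFst x) 0 := by
  refine hx.of_windowSum_le fun q q' m n => ⟨m - 1, n, ?_⟩
  have hrow : ∀ k, ∑ l ∈ range (q' + 1), ‖_root_.shiftFst x (m + k, n + l)‖ =
      if m + k = 0 then 0 else ∑ l ∈ range (q' + 1), ‖x (m + k - 1, n + l)‖ := by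
    intro k
    split_ifs with hk <;>
      simp only [_root_.shiftFst, hk, if_true, if_false, norm_zero, sum_const_zero]
  simp only [windowSum, sub_zero, hrow]
  exact sum_range_shift_le (g := fun j => ∑ l ∈ range (q' + 1), ‖x (j, n + l)‖)
    (fun _ => sum_nonneg fun _ _ => norm_nonneg _) m q

lemma shiftSnd (hx : StronglyAlmostConvTo x 0) : StronglyAlmostConvTo (_root_.shiftSnd x) 0 := by
  refine hx.of_windowSum_le fun q q' m n => ⟨m, n - 1, ?_⟩
  have hentry : ∀ k l, ‖_root_.shiftSnd x (m + k, n + l)‖ =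
      if n + l = 0 then 0 else ‖x (m + k, n + l - 1)‖ := by
    intro k l
    split_ifs with hl <;> simp only [_root_.shiftSnd, hl, if_true, if_false, norm_zero]
  simp only [windowSum, sub_zero, hentry]
  exact sum_le_sum fun k _ =>
    sum_range_shift_le (g := fun j => ‖x (m + k, j)‖) (fun _ => norm_nonneg _) n q'

end StronglyAlmostConvTo

lemma Btrans_eq (r s t u : ℝ) (x : ℕ × ℕ → ℂ) :
    Btrans r s t u x = (s * u : ℂ) • shiftFst (shiftSnd x) + (s * t : ℂ) • shiftFst x +
      (r * u : ℂ) • shiftSnd x + (r * t : ℂ) • x := by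
  funext p
  have hcorner : shiftFst (shiftSnd x) p =
      if p.1 = 0 ∨ p.2 = 0 then 0 else x (p.1 - 1, p.2 - 1) := by
    by_cases h₁ : p.1 = 0 <;> by_cases h₂ : p.2 = 0 <;> simp [shiftFst, shiftSnd, h₁, h₂]
  simp only [Btrans, Pi.add_apply, Pi.smul_apply, smul_eq_mul, hcorner]
  rfl

lemma StronglyAlmostConvTo.Btrans {x : ℕ × ℕ → ℂ} (hx : StronglyAlmostConvTo x 0)
    (r s t u : ℝ) : StronglyAlmostConvTo (Btrans r s t u x) 0 := by
  have h := (((hx.shiftSnd.shiftFst.const_smul (s * u)).add (hx.shiftFst.const_smul (s * t))).add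
    (hx.shiftSnd.const_smul (r * u))).add (hx.const_smul (r * t))
  rw [Btrans_eq]
  simpa only [smul_zero, add_zero] using h

theorem stmt8_general (r t : ℝ) :
    ∀ x : ℕ × ℕ → ℂ, StronglyAlmostConvTo x 0 →
      StronglyAlmostConvTo (Btrans r (-r) t (-t) x) 0 :=
  fun _ hx => hx.Btrans r (-r) t (-t)

/-- With `s = −r`, `u = −t`: if `x` is strongly almost null then so is
`B(r,−r,t,−t)x`; that is, `[C_{f0}] ⊆ B[C_{f0}]`. -/
theorem stmt8 (r t : ℝ) (hr : r ≠ 0) (ht : t ≠ 0) :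
    ∀ x : ℕ × ℕ → ℂ, StronglyAlmostConvTo x 0 →
      StronglyAlmostConvTo (Btrans r (-r) t (-t) x) 0 :=
  stmt8_general r t
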